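/- arXiv:1705.02154 — 3 statements merged into one kernel-verified Lean document; each statement's English description precedes it below -/
import Mathlib

section
/- Let n ≥ 1 and let P be a row-stochastic n×n matrix. Then there exists a probability vector π on Fin n that is stationary for P, i.e. a nontrivial nonnegative solution of (I − Pᵀ)π = 0, meaning Σ_i π i · P i j = π j for all j. -/
/-!
`P - 1` kills the all-ones vector, so it is singular and some `v ≠ 0` satisfies `v ᵥ* P = v`.
The triangle inequality gives `|v| ≤ |v| ᵥ* P` entrywise, and both sides have the same total mass
because the rows of `P` sum to one; hence `|v|` is itself stationary, and normalising it gives a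
stationary distribution.
-/

open Finset

namespace Matrix

variable {ι R : Type*} [Fintype ι] [DecidableEq ι]

theorem exists_ne_zero_vecMul_eq_self [CommRing R] [IsDomain R] [Nonempty ι]
    {P : Matrix ι ι R} (hP : P *ᵥ 1 = 1) : ∃ v ≠ 0, v ᵥ* P = v := by
  have hdet : (P - 1).det = 0 :=
    exists_mulVec_eq_zero_iff.mp ⟨1, one_ne_zero, by rw [sub_mulVec, hP, one_mulVec, sub_self]⟩
  obtain ⟨v, hv, hvP⟩ := exists_vecMul_eq_zero_iff.mpr hdet
  exact ⟨v, hv, by rwa [vecMul_sub, vecMul_one, sub_eq_zero] at hvP⟩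

variable [Field R] [LinearOrder R] [IsStrictOrderedRing R]

theorem abs_vecMul_eq_self_of_vecMul_eq_self {P : Matrix ι ι R} (hP : P ∈ rowStochastic R ι)
    {v : ι → R} (hv : v ᵥ* P = v) : |v| ᵥ* P = |v| := by
  have hle : ∀ j, |v| j ≤ (|v| ᵥ* P) j := fun j =>
    calc |v| j = |∑ i, v i * P i j| := congrArg abs (congrFun hv j).symm
      _ ≤ ∑ i, |v i * P i j| := abs_sum_le_sum_abs _ _
      _ = (|v| ᵥ* P) j := by
        simp only [abs_mul, abs_of_nonneg (hP.1 _ _)]; rfl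
  have hmass : ∑ j, |v| j = ∑ j, (|v| ᵥ* P) j := by
    rw [← dotProduct_one, ← dotProduct_one, ← dotProduct_mulVec, hP.2]
  funext j
  exact ((sum_eq_sum_iff_of_le fun j _ => hle j).mp hmass j (mem_univ j)).symm

theorem exists_mem_stdSimplex_vecMul_eq_self [Nonempty ι] {P : Matrix ι ι R}
    (hP : P ∈ rowStochastic R ι) : ∃ π ∈ stdSimplex R ι, π ᵥ* P = π := by
  obtain ⟨v, hv, hvP⟩ := exists_ne_zero_vecMul_eq_self hP.2
  have habsP := abs_vecMul_eq_self_of_vecMul_eq_self hP hvP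
  have hmass : 0 < ∑ i, |v| i := by
    obtain ⟨i, hi⟩ := Function.ne_iff.mp hv
    exact sum_pos' (fun j _ => abs_nonneg (v j)) ⟨i, mem_univ i, abs_pos.mpr hi⟩
  refine ⟨(∑ i, |v| i)⁻¹ • |v|, ⟨fun i => ?_, ?_⟩, by rw [smul_vecMul, habsP]⟩
  · exact smul_nonneg (inv_nonneg.mpr hmass.le) (abs_nonneg (v i))
  · simp only [Pi.smul_apply, smul_eq_mul, ← mul_sum, inv_mul_cancel₀ hmass.ne']

end Matrix

/-- Every row-stochastic matrix admits a stationary probability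
vector, i.e. a nontrivial nonnegative solution of `(I − Pᵀ)π = 0`. -/
theorem exists_stationary_distribution
    (n : ℕ) (hn : 1 ≤ n) (P : Fin n → Fin n → ℝ)
    (hP0 : ∀ i j, 0 ≤ P i j) (hP1 : ∀ i, ∑ j, P i j = 1) :
    ∃ π : Fin n → ℝ,
      (∀ i, 0 ≤ π i) ∧ (∑ i, π i = 1) ∧ (∀ j, ∑ i, π i * P i j = π j) := by
  have : Nonempty (Fin n) := Fin.pos_iff_nonempty.mp hn
  obtain ⟨π, ⟨hπ0, hπ1⟩, hπP⟩ :=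
    Matrix.exists_mem_stdSimplex_vecMul_eq_self (Matrix.mem_rowStochastic_iff_sum.mpr ⟨hP0, hP1⟩)
  exact ⟨π, hπ0, hπ1, congr_fun hπP⟩
end

section
/- Let n ≥ 1 and let P be a row-stochastic n×n matrix that is primitive (irreducible and aperiodic), i.e. there exists N ≥ 1 such that every entry of P^N is strictly positive. Let π* be a probability vector on Fin n that is stationary for P. Then for every initial probability vector π₀ on Fin n, the distribution after k steps converges to π*: for every j, Σ_i π₀ i · (P^k) i j → π* j as k → ∞. -/
open Finset

/-- Doeblin contraction: if `Q` is row-stochastic with all entries `≥ ε` and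
`v` sums to zero, then the ℓ¹ norm of `v * Q` is at most `(1 - n ε)` times
that of `v`. -/
lemma doeblin_contract (n : ℕ) (Q : Matrix (Fin n) (Fin n) ℝ) (ε : ℝ)
    (hQε : ∀ i j, ε ≤ Q i j) (hQ1 : ∀ i, ∑ j, Q i j = 1)
    (v : Fin n → ℝ) (hv : ∑ i, v i = 0) :
    ∑ j, |∑ i, v i * Q i j| ≤ (1 - n * ε) * ∑ i, |v i| := by
  have key : ∀ j, |∑ i, v i * Q i j| ≤ ∑ i, |v i| * (Q i j - ε) := by
    intro j
    have h1 : ∑ i, v i * Q i j = ∑ i, v i * (Q i j - ε) := by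
      simp only [mul_sub, Finset.sum_sub_distrib, ← Finset.sum_mul, hv, zero_mul, sub_zero]
    rw [h1]
    calc |∑ i, v i * (Q i j - ε)| ≤ ∑ i, |v i * (Q i j - ε)| :=
          Finset.abs_sum_le_sum_abs _ _
      _ = ∑ i, |v i| * (Q i j - ε) := by
          refine Finset.sum_congr rfl fun i _ => ?_
          rw [abs_mul, abs_of_nonneg (sub_nonneg.2 (hQε i j))]
  calc ∑ j, |∑ i, v i * Q i j| ≤ ∑ j, ∑ i, |v i| * (Q i j - ε) :=
        Finset.sum_le_sum fun j _ => key j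
    _ = ∑ i, |v i| * (1 - n * ε) := by
        rw [Finset.sum_comm]
        refine Finset.sum_congr rfl fun i _ => ?_
        rw [← Finset.mul_sum]
        congr 1
        rw [Finset.sum_sub_distrib, hQ1 i, Finset.sum_const, Finset.card_univ,
          Fintype.card_fin, nsmul_eq_mul]
    _ = (1 - n * ε) * ∑ i, |v i| := by rw [Finset.mul_sum]; simp [mul_comm]

/-- For a primitive row-stochastic matrix `P` with stationary
probability vector `π⋆`, the distribution after `k` steps converges to `π⋆`
for every initial probability vector `π₀`. -/
theorem markov_convergence_of_primitive
    (n : ℕ) (hn : 1 ≤ n) (P : Matrix (Fin n) (Fin n) ℝ)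
    (hP0 : ∀ i j, 0 ≤ P i j) (hP1 : ∀ i, ∑ j, P i j = 1)
    (hprim : ∃ N : ℕ, 1 ≤ N ∧ ∀ i j, 0 < (P ^ N) i j)
    (πs : Fin n → ℝ)
    (hπs0 : ∀ i, 0 ≤ πs i) (hπs1 : ∑ i, πs i = 1)
    (hstat : ∀ j, ∑ i, πs i * P i j = πs j)
    (π₀ : Fin n → ℝ)
    (hπ00 : ∀ i, 0 ≤ π₀ i) (hπ01 : ∑ i, π₀ i = 1) :
    ∀ j, Filter.Tendsto (fun k : ℕ => ∑ i, π₀ i * (P ^ k) i j)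
      Filter.atTop (nhds (πs j)) := by
  obtain ⟨N, hN1, hNpos⟩ := hprim
  have hNpos' : 0 < N := hN1
  -- row sums of powers are 1
  have hPk1 : ∀ k i, ∑ j, (P ^ k) i j = 1 := by
    intro k
    induction k with
    | zero => intro i; simp [Matrix.one_apply, Finset.sum_ite_eq' (univ : Finset (Fin n))]
    | succ k ih =>
      intro i
      rw [pow_succ]
      simp only [Matrix.mul_apply]
      rw [Finset.sum_comm]
      calc ∑ l, ∑ j, (P ^ k) i l * P l j = ∑ l, (P ^ k) i l * ∑ j, P l j := by
            simp [Finset.mul_sum]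
        _ = ∑ l, (P ^ k) i l := by simp [hP1]
        _ = 1 := ih i
  -- the difference vector after k steps
  set v : ℕ → Fin n → ℝ := fun k j => ∑ i, (π₀ i - πs i) * (P ^ k) i j with hv
  -- v (k+m) j = ∑ l, v k l * (P^m) l j
  have hstep : ∀ k m j, v (k + m) j = ∑ l, v k l * (P ^ m) l j := by
    intro k m j
    simp only [hv, pow_add, Matrix.mul_apply, Finset.mul_sum, Finset.sum_mul]
    rw [Finset.sum_comm]
    exact Finset.sum_congr rfl fun l _ => Finset.sum_congr rfl fun i _ => by ring
  -- each v k sums to zero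
  have hvsum : ∀ k, ∑ j, v k j = 0 := by
    intro k
    simp only [hv]
    rw [Finset.sum_comm]
    calc ∑ i, ∑ j, (π₀ i - πs i) * (P ^ k) i j
        = ∑ i, (π₀ i - πs i) * ∑ j, (P ^ k) i j := by simp [Finset.mul_sum]
      _ = ∑ i, (π₀ i - πs i) := by simp [hPk1]
      _ = 0 := by rw [Finset.sum_sub_distrib, hπ01, hπs1, sub_self]
  -- the total variation distance
  set D : ℕ → ℝ := fun k => ∑ j, |v k j| with hD
  -- pick ε = min entry of P^N
  obtain ⟨p, -, hp⟩ := Finset.exists_min_image (univ : Finset (Fin n × Fin n))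
    (fun p => (P ^ N) p.1 p.2) ⟨(⟨0, hn⟩, ⟨0, hn⟩), Finset.mem_univ _⟩
  set ε : ℝ := (P ^ N) p.1 p.2 with hε
  have hεpos : 0 < ε := hNpos p.1 p.2
  have hεle : ∀ i j, ε ≤ (P ^ N) i j := fun i j => hp (i, j) (Finset.mem_univ _)
  set c : ℝ := 1 - n * ε with hc
  have hc1 : c < 1 := by
    have : (0 : ℝ) < n * ε := by positivity
    linarith
  have hc0 : 0 ≤ c := by
    have h1 : (n : ℝ) * ε ≤ ∑ j, (P ^ N) (⟨0, hn⟩ : Fin n) j := by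
      calc (n : ℝ) * ε = ∑ _j : Fin n, ε := by
            simp [Finset.sum_const, Finset.card_univ, nsmul_eq_mul]
        _ ≤ ∑ j, (P ^ N) (⟨0, hn⟩ : Fin n) j := Finset.sum_le_sum fun j _ => hεle _ j
    rw [hPk1] at h1
    simp only [hc]
    linarith
  -- D is non-increasing (single steps)
  have hmono : ∀ k m, k ≤ m → D m ≤ D k := by
    have hone : ∀ k, D (k + 1) ≤ D k := by
      intro k
      have := doeblin_contract n P 0 (fun i j => hP0 i j) hP1 (v k) (hvsum k)
      simp only [mul_zero, sub_zero, one_mul] at this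
      calc D (k + 1) = ∑ j, |∑ l, v k l * P l j| := by
            simp only [hD]
            refine Finset.sum_congr rfl fun j _ => ?_
            rw [show k + 1 = k + 1 from rfl, hstep k 1, pow_one]
        _ ≤ ∑ l, |v k l| := this
        _ = D k := rfl
    intro k m hkm
    induction m with
    | zero =>
      have hk0 : k = 0 := Nat.le_zero.mp hkm
      simp [hk0]
    | succ m ih =>
      rcases Nat.lt_or_ge k (m + 1) with h | h
      · exact le_trans (hone m) (ih (Nat.lt_succ_iff.mp h))
      · have : k = m + 1 := le_antisymm hkm h
        simp [this]
  -- contraction every N steps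
  have hcontr : ∀ k, D (k + N) ≤ c * D k := by
    intro k
    have := doeblin_contract n (P ^ N) ε hεle (hPk1 N) (v k) (hvsum k)
    calc D (k + N) = ∑ j, |∑ l, v k l * (P ^ N) l j| := by
          simp only [hD]
          exact Finset.sum_congr rfl fun j _ => by rw [hstep k N]
      _ ≤ (1 - n * ε) * ∑ l, |v k l| := this
      _ = c * D k := rfl
  -- D (m * N) ≤ c ^ m * D 0
  have hgeo : ∀ m, D (m * N) ≤ c ^ m * D 0 := by
    intro m
    induction m with
    | zero => simp
    | succ m ih =>
      have h1 : D ((m + 1) * N) ≤ c * D (m * N) := by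
        have := hcontr (m * N)
        calc D ((m + 1) * N) = D (m * N + N) := by ring_nf
          _ ≤ c * D (m * N) := this
      calc D ((m + 1) * N) ≤ c * D (m * N) := h1
        _ ≤ c * (c ^ m * D 0) := by
            exact mul_le_mul_of_nonneg_left ih hc0
        _ = c ^ (m + 1) * D 0 := by ring
  -- D k ≤ c ^ (k / N) * D 0
  have hbound : ∀ k, D k ≤ c ^ (k / N) * D 0 := by
    intro k
    calc D k ≤ D (k / N * N) := hmono _ k (Nat.div_mul_le_self k N)
      _ ≤ c ^ (k / N) * D 0 := hgeo _
  -- the bound tends to 0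
  have htend : Filter.Tendsto (fun k : ℕ => c ^ (k / N) * D 0) Filter.atTop (nhds 0) := by
    have h1 : Filter.Tendsto (fun m : ℕ => c ^ m) Filter.atTop (nhds 0) :=
      tendsto_pow_atTop_nhds_zero_of_lt_one hc0 hc1
    have h2 : Filter.Tendsto (fun k : ℕ => k / N) Filter.atTop Filter.atTop := by
      refine Filter.tendsto_atTop_atTop.2 fun b => ⟨b * N, fun a ha => ?_⟩
      exact (Nat.le_div_iff_mul_le hNpos').2 ha
    have := (h1.comp h2).mul_const (D 0)
    simpa using this
  -- stationarity for all powers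
  have hstatk : ∀ k j, ∑ i, πs i * (P ^ k) i j = πs j := by
    intro k
    induction k with
    | zero =>
      intro j
      simp [Matrix.one_apply, mul_ite, Finset.sum_ite_eq' (univ : Finset (Fin n))]
    | succ k ih =>
      intro j
      rw [pow_succ]
      simp only [Matrix.mul_apply, Finset.mul_sum]
      rw [Finset.sum_comm]
      calc ∑ l, ∑ i, πs i * ((P ^ k) i l * P l j)
          = ∑ l, (∑ i, πs i * (P ^ k) i l) * P l j := by
            simp [Finset.sum_mul, mul_assoc]
        _ = ∑ l, πs l * P l j := by
            refine Finset.sum_congr rfl fun l _ => ?_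
            rw [ih l]
        _ = πs j := hstat j
  -- conclude
  intro j
  have heq : ∀ k, (∑ i, π₀ i * (P ^ k) i j) = v k j + πs j := by
    intro k
    simp only [hv, sub_mul, Finset.sum_sub_distrib, hstatk k j]
    ring
  have hvj : Filter.Tendsto (fun k => v k j) Filter.atTop (nhds 0) := by
    refine squeeze_zero_norm (fun k => ?_) htend
    calc ‖v k j‖ = |v k j| := rfl
      _ ≤ D k := Finset.single_le_sum (f := fun j => |v k j|)
            (fun i _ => abs_nonneg _) (Finset.mem_univ j)
      _ ≤ c ^ (k / N) * D 0 := hbound k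
  have : Filter.Tendsto (fun k => v k j + πs j) Filter.atTop (nhds (0 + πs j)) :=
    hvj.add tendsto_const_nhds
  rw [zero_add] at this
  exact this.congr fun k => (heq k).symm
end

section
/- Let n ≥ 1, let P be a row-stochastic n×n matrix that is primitive (there exists N ≥ 1 such that every entry of P^N is strictly positive), and let π* be a probability vector stationary for P. Then for every initial probability vector π₀ on Fin n, the conditional entropies H(q_k) − H(q_{k−1}) of the Markov chain with initial distribution π₀ converge, as k → ∞, to R(π*,P) = -Σ_i Σ_j π* i · P i j · logb 2 (P i j); in particular the limit is invariant to the selection of the initial distribution. -/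
open Finset

/-- Base-2 entropy of the joint distribution of the length-`(k+1)` Markov chain
with initial distribution `π₀` and transition matrix `P`. -/
noncomputable def jointEntropy (n : ℕ) (P : Matrix (Fin n) (Fin n) ℝ)
    (π₀ : Fin n → ℝ) (k : ℕ) : ℝ :=
  -∑ x : Fin (k + 1) → Fin n,
      (π₀ (x 0) * ∏ i : Fin k, P (x i.castSucc) (x i.succ)) *
        Real.logb 2 (π₀ (x 0) * ∏ i : Fin k, P (x i.castSucc) (x i.succ))


section Aux
variable {n : ℕ}

section Aux

variable {n : ℕ}

-- powers of a stochastic matrix are stochastic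
lemma pow_nonneg' {P : Matrix (Fin n) (Fin n) ℝ} (hP0 : ∀ i j, 0 ≤ P i j)
    (m : ℕ) : ∀ i j, 0 ≤ (P ^ m) i j := by
  induction m with
  | zero => intro i j; simp [Matrix.one_apply]; split <;> norm_num
  | succ m ih =>
    intro i j
    rw [pow_succ, Matrix.mul_apply]
    exact Finset.sum_nonneg fun k _ => mul_nonneg (ih i k) (hP0 k j)

lemma pow_rowsum {P : Matrix (Fin n) (Fin n) ℝ} (hP1 : ∀ i, ∑ j, P i j = 1)
    (m : ℕ) : ∀ i, ∑ j, (P ^ m) i j = 1 := by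
  induction m with
  | zero => intro i; simp [Matrix.one_apply]
  | succ m ih =>
    intro i
    simp only [pow_succ, Matrix.mul_apply]
    rw [Finset.sum_comm]
    simp only [← Finset.mul_sum]
    simp only [hP1]
    simpa using ih i



-- non-expansiveness of vecMul in ℓ¹
lemma vecMul_l1_le {Q : Matrix (Fin n) (Fin n) ℝ} (hQ0 : ∀ i j, 0 ≤ Q i j)
    (hQ1 : ∀ i, ∑ j, Q i j = 1) (v : Fin n → ℝ) :
    ∑ j, |(Matrix.vecMul v Q) j| ≤ ∑ i, |v i| := by
  calc ∑ j, |(Matrix.vecMul v Q) j| ≤ ∑ j, ∑ i, |v i| * Q i j := by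
        apply Finset.sum_le_sum
        intro j _
        rw [Matrix.vecMul, dotProduct]
        refine (Finset.abs_sum_le_sum_abs _ _).trans ?_
        apply Finset.sum_le_sum
        intro i _
        rw [abs_mul, abs_of_nonneg (hQ0 i j)]
    _ = ∑ i, |v i| := by
        rw [Finset.sum_comm]
        simp only [← Finset.mul_sum, hQ1, mul_one]

-- contraction for zero-sum vectors by a matrix with entries ≥ δ
lemma vecMul_l1_contract {Q : Matrix (Fin n) (Fin n) ℝ} {δ : ℝ}
    (hδ : ∀ i j, δ ≤ Q i j) (hQ1 : ∀ i, ∑ j, Q i j = 1)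
    {v : Fin n → ℝ} (hv : ∑ i, v i = 0) :
    ∑ j, |(Matrix.vecMul v Q) j| ≤ (1 - n * δ) * ∑ i, |v i| := by
  have key : ∀ j, (Matrix.vecMul v Q) j = ∑ i, v i * (Q i j - δ) := by
    intro j
    rw [Matrix.vecMul, dotProduct]
    simp only [mul_sub, Finset.sum_sub_distrib, ← Finset.sum_mul, hv, zero_mul, sub_zero]
  calc ∑ j, |(Matrix.vecMul v Q) j| ≤ ∑ j, ∑ i, |v i| * (Q i j - δ) := by
        apply Finset.sum_le_sum
        intro j _
        rw [key j]
        refine (Finset.abs_sum_le_sum_abs _ _).trans ?_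
        apply Finset.sum_le_sum
        intro i _
        rw [abs_mul, abs_of_nonneg (sub_nonneg.mpr (hδ i j))]
    _ = (1 - n * δ) * ∑ i, |v i| := by
        rw [Finset.sum_comm]
        simp only [← Finset.mul_sum, Finset.sum_sub_distrib, hQ1]
        simp only [Finset.sum_const, Finset.card_univ, Fintype.card_fin, nsmul_eq_mul]
        rw [← Finset.sum_mul]
        ring

lemma marginal_tendsto (hn : 1 ≤ n) {P : Matrix (Fin n) (Fin n) ℝ}
    (hP0 : ∀ i j, 0 ≤ P i j) (hP1 : ∀ i, ∑ j, P i j = 1)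
    (hprim : ∃ N : ℕ, 1 ≤ N ∧ ∀ i j, 0 < (P ^ N) i j)
    {πs : Fin n → ℝ} (hstat : ∀ j, ∑ i, πs i * P i j = πs j)
    {π₀ : Fin n → ℝ} (hsum : ∑ i, π₀ i = ∑ i, πs i) (i : Fin n) :
    Filter.Tendsto (fun m => Matrix.vecMul π₀ (P ^ m) i) Filter.atTop (nhds (πs i)) := by
  obtain ⟨N, hN1, hNpos⟩ := hprim
  haveI : NeZero n := ⟨by omega⟩
  -- minimal entry of P^N
  obtain ⟨p, -, hp⟩ := Finset.exists_min_image (Finset.univ : Finset (Fin n × Fin n))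
    (fun p => (P ^ N) p.1 p.2) ⟨(0, 0), Finset.mem_univ _⟩
  set δ : ℝ := (P ^ N) p.1 p.2 with hδdef
  have hδpos : 0 < δ := hNpos p.1 p.2
  have hδle : ∀ a b, δ ≤ (P ^ N) a b := fun a b => hp (a, b) (Finset.mem_univ _)
  set c : ℝ := 1 - n * δ with hcdef
  have hc0 : 0 ≤ c := by
    have : (n : ℝ) * δ ≤ 1 := by
      calc (n : ℝ) * δ = ∑ _j : Fin n, δ := by simp [mul_comm]
        _ ≤ ∑ j, (P ^ N) 0 j := Finset.sum_le_sum fun j _ => hδle 0 j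
        _ = 1 := pow_rowsum hP1 N 0
    linarith
  have hc1 : c < 1 := by
    have : 0 < (n : ℝ) * δ := by positivity
    simp only [hcdef]; linarith
  -- the difference vector
  set w : Fin n → ℝ := π₀ - πs with hwdef
  have hw0 : ∑ a, w a = 0 := by
    simp [hwdef, Pi.sub_apply, Finset.sum_sub_distrib, hsum]
  have hstat' : ∀ m : ℕ, Matrix.vecMul πs (P ^ m) = πs := by
    intro m
    induction m with
    | zero => simp
    | succ m ih =>
      rw [pow_succ, ← Matrix.vecMul_vecMul, ih]
      funext j
      simpa [Matrix.vecMul, dotProduct] using hstat j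
  set v : ℕ → Fin n → ℝ := fun m => Matrix.vecMul w (P ^ m) with hvdef
  have hvm : ∀ m a, v m a = Matrix.vecMul π₀ (P ^ m) a - πs a := by
    intro m a
    rw [hvdef]
    simp only [hwdef, Matrix.sub_vecMul, hstat' m, Pi.sub_apply]
  have hvsum : ∀ m, ∑ a, v m a = 0 := by
    intro m
    have : ∑ a, v m a = ∑ a, w a := by
      rw [hvdef]
      simp only [Matrix.vecMul, dotProduct]
      rw [Finset.sum_comm]
      simp only [← Finset.mul_sum, pow_rowsum hP1 m, mul_one]
    rw [this, hw0]
  set a : ℕ → ℝ := fun m => ∑ b, |v m b| with hadef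
  have ha0 : ∀ m, 0 ≤ a m := fun m => Finset.sum_nonneg fun b _ => abs_nonneg _
  have hstep : ∀ m, a (m + 1) ≤ a m := by
    intro m
    have : v (m + 1) = Matrix.vecMul (v m) P := by
      simp only [hvdef]
      rw [pow_succ, ← Matrix.vecMul_vecMul]
    rw [hadef]; simp only [this]
    exact vecMul_l1_le hP0 hP1 (v m)
  have hanti : Antitone a := antitone_nat_of_succ_le hstep
  have hcontract : ∀ m, a (m + N) ≤ c * a m := by
    intro m
    have hv' : v (m + N) = Matrix.vecMul (v m) (P ^ N) := by
      simp only [hvdef]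
      rw [pow_add, ← Matrix.vecMul_vecMul]
    rw [hadef]; simp only [hv']
    exact vecMul_l1_contract hδle (pow_rowsum hP1 N) (hvsum m)
  have hgeom : ∀ q r, a (q * N + r) ≤ c ^ q * a r := by
    intro q
    induction q with
    | zero => intro r; simp
    | succ q ih =>
      intro r
      have : (q + 1) * N + r = (q * N + r) + N := by ring
      rw [this]
      calc a (q * N + r + N) ≤ c * a (q * N + r) := hcontract _
        _ ≤ c * (c ^ q * a r) := by
            exact mul_le_mul_of_nonneg_left (ih r) hc0
        _ = c ^ (q + 1) * a r := by ring
  have hbound : ∀ m, a m ≤ c ^ (m / N) * a 0 := by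
    intro m
    have hm : (m / N) * N + m % N = m := by rw [mul_comm]; exact Nat.div_add_mod m N
    calc a m = a ((m / N) * N + m % N) := by rw [hm]
      _ ≤ c ^ (m / N) * a (m % N) := hgeom _ _
      _ ≤ c ^ (m / N) * a 0 := by
          exact mul_le_mul_of_nonneg_left (hanti (Nat.zero_le _)) (pow_nonneg hc0 _)
  -- a m → 0
  have hdiv : Filter.Tendsto (fun m : ℕ => m / N) Filter.atTop Filter.atTop := by
    apply Filter.tendsto_atTop_atTop.mpr
    intro b
    exact ⟨b * N, fun m hm => (Nat.le_div_iff_mul_le (by omega)).mpr hm⟩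
  have hpow : Filter.Tendsto (fun m : ℕ => c ^ (m / N) * a 0) Filter.atTop (nhds 0) := by
    have := (tendsto_pow_atTop_nhds_zero_of_lt_one hc0 hc1).comp hdiv
    simpa using this.mul_const (a 0)
  have haten : Filter.Tendsto a Filter.atTop (nhds 0) :=
    squeeze_zero ha0 hbound hpow
  -- conclude per-coordinate
  have hvi : Filter.Tendsto (fun m => v m i) Filter.atTop (nhds 0) := by
    rw [tendsto_zero_iff_abs_tendsto_zero]
    refine squeeze_zero (fun m => abs_nonneg _) (fun m => ?_) haten
    exact Finset.single_le_sum (f := fun b => |v m b|) (fun b _ => abs_nonneg _)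
      (Finset.mem_univ i)
  have := hvi.add_const (πs i)
  simp only [hvm, sub_add_cancel, zero_add] at this
  exact this
lemma snoc_prod {P : Matrix (Fin n) (Fin n) ℝ} (m : ℕ) (y : Fin (m + 1) → Fin n) (j : Fin n) :
    ∏ i : Fin (m + 1), P ((Fin.snoc y j : Fin (m + 2) → Fin n) i.castSucc)
      ((Fin.snoc y j : Fin (m + 2) → Fin n) i.succ)
    = (∏ i : Fin m, P (y i.castSucc) (y i.succ)) * P (y (Fin.last m)) j := by
  rw [Fin.prod_univ_castSucc]
  congr 1
  · apply Finset.prod_congr rfl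
    intro i _
    rw [Fin.succ_castSucc, Fin.snoc_castSucc, Fin.snoc_castSucc]
  · rw [Fin.succ_last, Fin.snoc_last, Fin.snoc_castSucc]

lemma snoc_zero' (m : ℕ) (y : Fin (m + 1) → Fin n) (j : Fin n) :
    (Fin.snoc y j : Fin (m + 2) → Fin n) 0 = y 0 := by
  have : (0 : Fin (m + 2)) = Fin.castSucc 0 := rfl
  rw [this, Fin.snoc_castSucc]

lemma sum_q_last {P : Matrix (Fin n) (Fin n) ℝ} (π₀ : Fin n → ℝ) (m : ℕ) (f : Fin n → ℝ) :
    ∑ y : Fin (m + 1) → Fin n,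
      (π₀ (y 0) * ∏ i : Fin m, P (y i.castSucc) (y i.succ)) * f (y (Fin.last m))
    = ∑ i, Matrix.vecMul π₀ (P ^ m) i * f i := by
  induction m generalizing f with
  | zero =>
    rw [pow_zero, Matrix.vecMul_one]
    rw [← Equiv.sum_comp (Equiv.funUnique (Fin 1) (Fin n)).symm]
    simp [Equiv.funUnique]
  | succ m ih =>
    rw [← Equiv.sum_comp (Fin.snocEquiv (fun _ => Fin n))]
    rw [Fintype.sum_prod_type]
    have hterm : ∀ (j : Fin n) (y : Fin (m + 1) → Fin n),
        (π₀ ((Fin.snocEquiv (fun _ => Fin n) (j, y)) 0) *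
          ∏ i : Fin (m + 1), P ((Fin.snocEquiv (fun _ => Fin n) (j, y)) i.castSucc)
            ((Fin.snocEquiv (fun _ => Fin n) (j, y)) i.succ)) *
          f ((Fin.snocEquiv (fun _ => Fin n) (j, y)) (Fin.last (m + 1)))
        = (π₀ (y 0) * ∏ i : Fin m, P (y i.castSucc) (y i.succ)) *
            (P (y (Fin.last m)) j * f j) := by
      intro j y
      change (π₀ ((Fin.snoc y j : Fin (m + 2) → Fin n) 0) *
          ∏ i : Fin (m + 1), P ((Fin.snoc y j : Fin (m + 2) → Fin n) i.castSucc)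
            ((Fin.snoc y j : Fin (m + 2) → Fin n) i.succ)) *
          f ((Fin.snoc y j : Fin (m + 2) → Fin n) (Fin.last (m + 1))) = _
      rw [snoc_prod, snoc_zero' m y j]
      have h1 : (Fin.snoc y j : Fin (m + 2) → Fin n) (Fin.last (m + 1)) = j :=
        Fin.snoc_last _ _
      rw [h1]
      ring
    simp only [hterm]
    rw [Finset.sum_comm]
    simp only [← Finset.mul_sum]
    rw [ih (fun i => ∑ j, P i j * f j)]
    simp only [Finset.mul_sum]
    rw [Finset.sum_comm]
    apply Finset.sum_congr rfl
    intro j _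
    rw [pow_succ, ← Matrix.vecMul_vecMul]
    simp [Matrix.vecMul, dotProduct, Finset.sum_mul, mul_assoc]
lemma mul_logb_mul {a b : ℝ} (ha : 0 ≤ a) (hb : 0 ≤ b) :
    (a * b) * Real.logb 2 (a * b) = (a * b) * Real.logb 2 a + (a * b) * Real.logb 2 b := by
  rcases eq_or_lt_of_le ha with h | h
  · simp [← h]
  rcases eq_or_lt_of_le hb with h' | h'
  · simp [← h']
  rw [Real.logb_mul (ne_of_gt h) (ne_of_gt h')]
  ring

lemma entropy_step {P : Matrix (Fin n) (Fin n) ℝ} (hP0 : ∀ i j, 0 ≤ P i j)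
    (hP1 : ∀ i, ∑ j, P i j = 1) {π₀ : Fin n → ℝ} (hπ00 : ∀ i, 0 ≤ π₀ i) (m : ℕ) :
    jointEntropy n P π₀ (m + 1) = jointEntropy n P π₀ m
      - ∑ i, Matrix.vecMul π₀ (P ^ m) i * (∑ j, P i j * Real.logb 2 (P i j)) := by
  simp only [jointEntropy]
  rw [← Equiv.sum_comp (Fin.snocEquiv (fun _ => Fin n)), Fintype.sum_prod_type]
  have hterm : ∀ (j : Fin n) (y : Fin (m + 1) → Fin n),
      (π₀ ((Fin.snocEquiv (fun _ => Fin n) (j, y)) 0) *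
        ∏ i : Fin (m + 1), P ((Fin.snocEquiv (fun _ => Fin n) (j, y)) i.castSucc)
          ((Fin.snocEquiv (fun _ => Fin n) (j, y)) i.succ)) *
        Real.logb 2 (π₀ ((Fin.snocEquiv (fun _ => Fin n) (j, y)) 0) *
          ∏ i : Fin (m + 1), P ((Fin.snocEquiv (fun _ => Fin n) (j, y)) i.castSucc)
            ((Fin.snocEquiv (fun _ => Fin n) (j, y)) i.succ))
      = ((π₀ (y 0) * ∏ i : Fin m, P (y i.castSucc) (y i.succ)) *
          Real.logb 2 (π₀ (y 0) * ∏ i : Fin m, P (y i.castSucc) (y i.succ))) *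
            P (y (Fin.last m)) j
        + (π₀ (y 0) * ∏ i : Fin m, P (y i.castSucc) (y i.succ)) *
            (P (y (Fin.last m)) j * Real.logb 2 (P (y (Fin.last m)) j)) := by
    intro j y
    change (π₀ ((Fin.snoc y j : Fin (m + 2) → Fin n) 0) *
        ∏ i : Fin (m + 1), P ((Fin.snoc y j : Fin (m + 2) → Fin n) i.castSucc)
          ((Fin.snoc y j : Fin (m + 2) → Fin n) i.succ)) *
        Real.logb 2 (π₀ ((Fin.snoc y j : Fin (m + 2) → Fin n) 0) *
          ∏ i : Fin (m + 1), P ((Fin.snoc y j : Fin (m + 2) → Fin n) i.castSucc)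
            ((Fin.snoc y j : Fin (m + 2) → Fin n) i.succ)) = _
    rw [snoc_prod, snoc_zero' m y j]
    have hq : 0 ≤ π₀ (y 0) * ∏ i : Fin m, P (y i.castSucc) (y i.succ) :=
      mul_nonneg (hπ00 _) (Finset.prod_nonneg fun i _ => hP0 _ _)
    rw [← mul_assoc, mul_logb_mul hq (hP0 (y (Fin.last m)) j)]
    ring
  simp only [hterm]
  rw [Finset.sum_comm]
  simp only [Finset.sum_add_distrib]
  simp only [← Finset.mul_sum, ← Finset.sum_mul]
  simp only [hP1, mul_one]
  have hlast := sum_q_last (P := P) π₀ m (fun i => ∑ j, P i j * Real.logb 2 (P i j))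
  rw [hlast]
  ring
end Aux

/-- For a primitive row-stochastic matrix `P` with stationary
probability vector `π⋆`, and any initial probability vector `π₀`, the
conditional entropies `H(q_k) − H(q_{k−1})` converge to the entropy rate
`R(π⋆,P)`; in particular the limit does not depend on `π₀`. -/
theorem markov_conditional_entropy_tendsto_rate
    (n : ℕ) (hn : 1 ≤ n) (P : Matrix (Fin n) (Fin n) ℝ)
    (hP0 : ∀ i j, 0 ≤ P i j) (hP1 : ∀ i, ∑ j, P i j = 1)
    (hprim : ∃ N : ℕ, 1 ≤ N ∧ ∀ i j, 0 < (P ^ N) i j)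
    (πs : Fin n → ℝ)
    (hπs0 : ∀ i, 0 ≤ πs i) (hπs1 : ∑ i, πs i = 1)
    (hstat : ∀ j, ∑ i, πs i * P i j = πs j)
    (π₀ : Fin n → ℝ)
    (hπ00 : ∀ i, 0 ≤ π₀ i) (hπ01 : ∑ i, π₀ i = 1) :
    Filter.Tendsto
      (fun k : ℕ => jointEntropy n P π₀ k - jointEntropy n P π₀ (k - 1))
      Filter.atTop
      (nhds (-∑ i, ∑ j, πs i * P i j * Real.logb 2 (P i j))) := by
  set g : Fin n → ℝ := fun i => ∑ j, P i j * Real.logb 2 (P i j) with hg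
  set D : ℕ → ℝ := fun m => -∑ i, Matrix.vecMul π₀ (P ^ m) i * g i with hD
  have hL : (-∑ i, ∑ j, πs i * P i j * Real.logb 2 (P i j)) = -∑ i, πs i * g i := by
    congr 1
    apply Finset.sum_congr rfl
    intro i _
    rw [hg, Finset.mul_sum]
    apply Finset.sum_congr rfl
    intro j _
    ring
  rw [hL]
  have hDlim : Filter.Tendsto D Filter.atTop (nhds (-∑ i, πs i * g i)) := by
    apply Filter.Tendsto.neg
    apply tendsto_finset_sum
    intro i _
    exact (marginal_tendsto hn hP0 hP1 hprim hstat (hπ01.trans hπs1.symm) i).mul_const (g i)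
  have hcomp : Filter.Tendsto (fun k : ℕ => D (k - 1)) Filter.atTop
      (nhds (-∑ i, πs i * g i)) :=
    hDlim.comp (Filter.tendsto_sub_atTop_nat 1)
  apply hcomp.congr'
  rw [Filter.eventuallyEq_iff_exists_mem]
  refine ⟨Set.Ici 1, Filter.mem_atTop 1, ?_⟩
  intro k hk
  obtain ⟨m, rfl⟩ : ∃ m, k = m + 1 := ⟨k - 1, by have h1 : 1 ≤ k := hk; omega⟩
  simp only [Nat.add_sub_cancel]
  rw [entropy_step hP0 hP1 hπ00 m]
  simp only [hD, hg]
  ring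
end Aux
end
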